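/- For each closed conditional expression t there exists a cr-basic form t' such that CP_cr proves t = t', where a cr-basic form is T, F, or t1 ◁ a ▷ t2 with t1, t2 cr-basic forms whose central condition (if present) differs from a. -/

import Mathlib

inductive CE (A : Type) : Type
  | tt : CE A
  | ff : CE A
  | atom : A → CE A
  | cond : CE A → CE A → CE A → CE A

inductive Deriv {A : Type} (Ax : CE A → CE A → Prop) : CE A → CE A → Prop
  | ax {t t'} : Ax t t' → Deriv Ax t t'
  | refl (t) : Deriv Ax t t
  | symm {t t'} : Deriv Ax t t' → Deriv Ax t' t
  | trans {t t' t''} : Deriv Ax t t' → Deriv Ax t' t'' → Deriv Ax t t''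
  | congr {x x' y y' z z'} : Deriv Ax x x' → Deriv Ax y y' → Deriv Ax z z' →
      Deriv Ax (.cond x y z) (.cond x' y' z')
  | cp1 (x y) : Deriv Ax (.cond x .tt y) x
  | cp2 (x y) : Deriv Ax (.cond x .ff y) y
  | cp3 (x) : Deriv Ax (.cond .tt x .ff) x
  | cp4 (x y z u v) : Deriv Ax (.cond x (.cond y z u) v) (.cond (.cond x y v) z (.cond x u v))

/-- Derivability from the CP axioms alone (no extra axioms). -/
def CP {A : Type} : CE A → CE A → Prop := Deriv (fun _ _ => False)

/-- The axiom schemes (CPcr1) and (CPcr2), for each atom a. -/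
def AxCr {A : Type} : CE A → CE A → Prop := fun s t =>
  (∃ (a : A) (x y z : CE A),
      s = .cond (.cond x (.atom a) y) (.atom a) z ∧ t = .cond x (.atom a) z) ∨
  (∃ (a : A) (x y z : CE A),
      s = .cond x (.atom a) (.cond y (.atom a) z) ∧ t = .cond x (.atom a) z)

/-- The side condition for cr-basic forms: the central condition (if present)
differs from a. -/
def crOK {A : Type} (a : A) : CE A → Prop
  | .cond _ (.atom b) _ => b ≠ a
  | _ => True

/-- cr-basic forms. -/
inductive CrBasic {A : Type} : CE A → Prop
  | tt : CrBasic .tt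
  | ff : CrBasic .ff
  | cond {t1 t2 : CE A} (a : A) : CrBasic t1 → CrBasic t2 → crOK a t1 → crOK a t2 →
      CrBasic (.cond t1 (.atom a) t2)

/-!
Normalise bottom-up. For `x ◁ y ▷ z` with all three parts already cr-basic, induct on `y`:
CP1/CP2 settle `y = T, F`, and for `y = p ◁ a ▷ q` CP4 rewrites the term to
`(x ◁ p ▷ z) ◁ a ▷ (x ◁ q ▷ z)`, whose branches normalise by induction. A branch of the result
whose central condition is again `a` is reduced by one application of CPcr1 (left) or CPcr2
(right) to its own branch on that side, and that one already satisfies the side condition for `a`.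
-/

section

variable {A : Type}

def HasCrBasicForm (t : CE A) : Prop :=
  ∃ t' : CE A, CrBasic t' ∧ Deriv AxCr t t'

lemma HasCrBasicForm.of_deriv {s t : CE A} (ht : HasCrBasicForm t) (h : Deriv AxCr s t) :
    HasCrBasicForm s :=
  let ⟨t', ht', d⟩ := ht
  ⟨t', ht', h.trans d⟩

lemma CrBasic.hasCrBasicForm {t : CE A} (h : CrBasic t) : HasCrBasicForm t :=
  ⟨t, h, .refl t⟩

lemma CrBasic.exists_crOK_left (a : A) {t₁ : CE A} (h : CrBasic t₁) (t₂ : CE A) :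
    ∃ u : CE A, CrBasic u ∧ crOK a u ∧
      Deriv AxCr (.cond t₁ (.atom a) t₂) (.cond u (.atom a) t₂) := by
  cases h with
  | tt => exact ⟨.tt, .tt, trivial, .refl _⟩
  | ff => exact ⟨.ff, .ff, trivial, .refl _⟩
  | @cond p q b hp hq okp okq =>
    by_cases hb : b = a
    · subst hb
      exact ⟨p, hp, okp, .ax (Or.inl ⟨b, p, q, t₂, rfl, rfl⟩)⟩
    · exact ⟨.cond p (.atom b) q, .cond b hp hq okp okq, hb, .refl _⟩

lemma CrBasic.exists_crOK_right (a : A) {t₂ : CE A} (h : CrBasic t₂) (t₁ : CE A) :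
    ∃ u : CE A, CrBasic u ∧ crOK a u ∧
      Deriv AxCr (.cond t₁ (.atom a) t₂) (.cond t₁ (.atom a) u) := by
  cases h with
  | tt => exact ⟨.tt, .tt, trivial, .refl _⟩
  | ff => exact ⟨.ff, .ff, trivial, .refl _⟩
  | @cond p q b hp hq okp okq =>
    by_cases hb : b = a
    · subst hb
      exact ⟨q, hq, okq, .ax (Or.inr ⟨b, t₁, p, q, rfl, rfl⟩)⟩
    · exact ⟨.cond p (.atom b) q, .cond b hp hq okp okq, hb, .refl _⟩

lemma hasCrBasicForm_cond_atom (a : A) {t₁ t₂ : CE A} (h₁ : CrBasic t₁) (h₂ : CrBasic t₂) :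
    HasCrBasicForm (.cond t₁ (.atom a) t₂) := by
  obtain ⟨u, hu, oku, du⟩ := h₁.exists_crOK_left a t₂
  obtain ⟨v, hv, okv, dv⟩ := h₂.exists_crOK_right a u
  exact (CrBasic.cond a hu hv oku okv).hasCrBasicForm.of_deriv (du.trans dv)

lemma hasCrBasicForm_cond {x y z : CE A} (hx : CrBasic x) (hy : CrBasic y) (hz : CrBasic z) :
    HasCrBasicForm (.cond x y z) := by
  induction hy with
  | tt => exact hx.hasCrBasicForm.of_deriv (.cp1 _ _)
  | ff => exact hz.hasCrBasicForm.of_deriv (.cp2 _ _)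
  | @cond p q a _ _ _ _ ihp ihq =>
    obtain ⟨s₁, hs₁, d₁⟩ := ihp
    obtain ⟨s₂, hs₂, d₂⟩ := ihq
    exact (hasCrBasicForm_cond_atom a hs₁ hs₂).of_deriv
      ((Deriv.cp4 x p (.atom a) q z).trans (.congr d₁ (.refl _) d₂))

end

theorem exists_cr_basic_form (A : Type) (t : CE A) :
    ∃ t' : CE A, CrBasic t' ∧ Deriv AxCr t t' := by
  induction t with
  | tt => exact CrBasic.tt.hasCrBasicForm
  | ff => exact CrBasic.ff.hasCrBasicForm
  | atom a =>
    exact (CrBasic.cond a .tt .ff trivial trivial).hasCrBasicForm.of_deriv (.symm (.cp3 _))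
  | cond x y z ihx ihy ihz =>
    obtain ⟨x', hx, dx⟩ := ihx
    obtain ⟨y', hy, dy⟩ := ihy
    obtain ⟨z', hz, dz⟩ := ihz
    exact (hasCrBasicForm_cond hx hy hz).of_deriv (.congr dx dy dz)
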